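/- Let μ > 1 and h < 0, and let ξ¹, ξ² : ℝ² → ℝ be C² functions satisfying the Killing system for the metric g = (2/(x²+y²−2h)²)·diag(1, 1/μ) on all of ℝ². Then ξ¹ satisfies the second-order equation 2μ(x²+y²−2h)·∂²ξ¹/∂y²(x,y) − 4μy·∂ξ¹/∂y(x,y) + 4ξ¹(x,y) = 0 for all (x,y) ∈ ℝ², and ξ² satisfies (2/μ)(x²+y²−2h)·∂²ξ²/∂x²(x,y) − (4/μ)x·∂ξ²/∂x(x,y) + 4ξ²(x,y) = 0 for all (x,y) ∈ ℝ². -/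

import Mathlib

/-- Partial derivative in the first variable of a curried function `ℝ → ℝ → ℝ`. -/
noncomputable def pdx (f : ℝ → ℝ → ℝ) : ℝ → ℝ → ℝ :=
  fun x y => deriv (fun x' => f x' y) x

/-- Partial derivative in the second variable of a curried function `ℝ → ℝ → ℝ`. -/
noncomputable def pdy (f : ℝ → ℝ → ℝ) : ℝ → ℝ → ℝ :=
  fun x y => deriv (fun y' => f x y') y

/-- The Killing system for the metric `g = (2/(x²+y²−2h)²)·diag(1, 1/μ)` on `ℝ²`:
(i) `∂ᵧξ¹ + (1/μ)∂ₓξ² = 0`;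
(ii) `−4(xξ¹ + yξ²)/(x²+y²−2h) + 2∂ₓξ¹ = 0`;
(iii) `−4(xξ¹ + yξ²)/(x²+y²−2h) + 2∂ᵧξ² = 0`. -/
def KillingSystem (μ h : ℝ) (ξ1 ξ2 : ℝ → ℝ → ℝ) : Prop :=
  ∀ x y : ℝ,
    pdy ξ1 x y + (1 / μ) * pdx ξ2 x y = 0 ∧
    -4 * (x * ξ1 x y + y * ξ2 x y) / (x ^ 2 + y ^ 2 - 2 * h) + 2 * pdx ξ1 x y = 0 ∧
    -4 * (x * ξ1 x y + y * ξ2 x y) / (x ^ 2 + y ^ 2 - 2 * h) + 2 * pdy ξ2 x y = 0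

/-!
Differentiating (i) in `y` and using the symmetry of mixed partials gives
`∂ᵧᵧξ¹ = -(1/μ) ∂ₓ(∂ᵧξ²)`, and (iii) expresses `∂ᵧξ²` as `2(xξ¹ + yξ²)/(x²+y²−2h)`.
Differentiating this quotient in `x` and eliminating `∂ₓξ¹` by (ii) and `∂ₓξ²` by (i) leaves
`∂ₓ∂ᵧξ² = 2(ξ¹ − μy∂ᵧξ¹)/(x²+y²−2h)`, which is the equation for `ξ¹`. The equation for `ξ²` is
the same one for the Killing field obtained by exchanging `x` and `y`, `ξ¹` and `ξ²`, `μ` and `1/μ`.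
-/

open Function

section PartialDerivatives

variable {f : ℝ → ℝ → ℝ} {x y : ℝ}

theorem HasFDerivAt.hasDerivAt_fst_slice {F : ℝ × ℝ → ℝ} {F' : ℝ × ℝ →L[ℝ] ℝ}
    (hF : HasFDerivAt F F' (x, y)) : HasDerivAt (fun x' => F (x', y)) (F' (1, 0)) x :=
  hF.comp_hasDerivAt x ((hasDerivAt_id x).prodMk (hasDerivAt_const x y))

theorem HasFDerivAt.hasDerivAt_snd_slice {F : ℝ × ℝ → ℝ} {F' : ℝ × ℝ →L[ℝ] ℝ}
    (hF : HasFDerivAt F F' (x, y)) : HasDerivAt (fun y' => F (x, y')) (F' (0, 1)) y :=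
  hF.comp_hasDerivAt y ((hasDerivAt_const y x).prodMk (hasDerivAt_id y))

theorem pdx_eq_fderiv (hf : DifferentiableAt ℝ (uncurry f) (x, y)) :
    pdx f x y = fderiv ℝ (uncurry f) (x, y) (1, 0) :=
  hf.hasFDerivAt.hasDerivAt_fst_slice.deriv

theorem pdy_eq_fderiv (hf : DifferentiableAt ℝ (uncurry f) (x, y)) :
    pdy f x y = fderiv ℝ (uncurry f) (x, y) (0, 1) :=
  hf.hasFDerivAt.hasDerivAt_snd_slice.deriv

theorem hasDerivAt_pdx (hf : DifferentiableAt ℝ (uncurry f) (x, y)) :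
    HasDerivAt (fun x' => f x' y) (pdx f x y) x := by
  rw [pdx_eq_fderiv hf]
  exact hf.hasFDerivAt.hasDerivAt_fst_slice

theorem hasDerivAt_pdy (hf : DifferentiableAt ℝ (uncurry f) (x, y)) :
    HasDerivAt (fun y' => f x y') (pdy f x y) y := by
  rw [pdy_eq_fderiv hf]
  exact hf.hasFDerivAt.hasDerivAt_snd_slice

theorem ContDiff.uncurry_swap {n : WithTop ℕ∞} (hf : ContDiff ℝ n (uncurry f)) :
    ContDiff ℝ n (uncurry (swap f)) :=
  hf.comp (contDiff_snd.prodMk contDiff_fst)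

theorem pdx_swap (f : ℝ → ℝ → ℝ) : pdx (swap f) = swap (pdy f) := rfl

theorem pdy_swap (f : ℝ → ℝ → ℝ) : pdy (swap f) = swap (pdx f) := rfl

theorem pdy_pdx_eq_pdx_pdy (hf : ContDiff ℝ 2 (uncurry f)) (x y : ℝ) :
    pdy (pdx f) x y = pdx (pdy f) x y := by
  set F := uncurry f
  have hF : Differentiable ℝ F := hf.differentiable two_ne_zero
  have hF' : Differentiable ℝ (fderiv ℝ F) :=
    (hf.fderiv_right one_add_one_eq_two.le).differentiable one_ne_zero
  have hpartial (v : ℝ × ℝ) : HasFDerivAt (fun p => fderiv ℝ F p v)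
      ((ContinuousLinearMap.apply ℝ ℝ v).comp (fderiv ℝ (fderiv ℝ F) (x, y))) (x, y) :=
    (ContinuousLinearMap.apply ℝ ℝ v).hasFDerivAt.comp (x, y) (hF' (x, y)).hasFDerivAt
  have hpdx : pdx f = fun a b => fderiv ℝ F (a, b) (1, 0) := by
    ext a b; exact pdx_eq_fderiv (hF (a, b))
  have hpdy : pdy f = fun a b => fderiv ℝ F (a, b) (0, 1) := by
    ext a b; exact pdy_eq_fderiv (hF (a, b))
  rw [hpdx, hpdy, pdy, pdx, (hpartial (1, 0)).hasDerivAt_snd_slice.deriv,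
    (hpartial (0, 1)).hasDerivAt_fst_slice.deriv]
  exact (hf.contDiffAt.isSymmSndFDerivAt (by simp)) (0, 1) (1, 0)

end PartialDerivatives

theorem sq_add_sq_sub_two_mul_pos {h : ℝ} (hh : h < 0) (x y : ℝ) : 0 < x ^ 2 + y ^ 2 - 2 * h := by
  nlinarith [sq_nonneg x, sq_nonneg y]

namespace KillingSystem

variable {μ h : ℝ} {ξ1 ξ2 : ℝ → ℝ → ℝ}

theorem pdy_fst (hK : KillingSystem μ h ξ1 ξ2) (x y : ℝ) :
    pdy ξ1 x y = -(1 / μ) * pdx ξ2 x y := by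
  linear_combination (hK x y).1

theorem pdx_snd (hK : KillingSystem μ h ξ1 ξ2) (hμ : μ ≠ 0) (x y : ℝ) :
    pdx ξ2 x y = -μ * pdy ξ1 x y := by
  rw [hK.pdy_fst]
  field_simp

theorem pdx_fst (hK : KillingSystem μ h ξ1 ξ2) (x y : ℝ) :
    pdx ξ1 x y = 2 * (x * ξ1 x y + y * ξ2 x y) / (x ^ 2 + y ^ 2 - 2 * h) := by
  linear_combination (hK x y).2.1 / 2

theorem pdy_snd (hK : KillingSystem μ h ξ1 ξ2) (x y : ℝ) :
    pdy ξ2 x y = 2 * (x * ξ1 x y + y * ξ2 x y) / (x ^ 2 + y ^ 2 - 2 * h) := by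
  linear_combination (hK x y).2.2 / 2

theorem swap (hK : KillingSystem μ h ξ1 ξ2) (hμ : μ ≠ 0) :
    KillingSystem μ⁻¹ h (swap ξ2) (swap ξ1) := by
  intro x y
  simp only [pdx_swap, pdy_swap, Function.swap]
  refine ⟨?_, ?_, ?_⟩
  · rw [hK.pdx_snd hμ]
    field_simp
    ring
  · linear_combination (hK y x).2.2
  · linear_combination (hK y x).2.1

theorem pdx_pdy_snd (hK : KillingSystem μ h ξ1 ξ2) (hμ : μ ≠ 0) (hh : h < 0)
    (hξ1 : Differentiable ℝ (uncurry ξ1)) (hξ2 : Differentiable ℝ (uncurry ξ2)) (x y : ℝ) :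
    pdx (pdy ξ2) x y = 2 * (ξ1 x y - μ * y * pdy ξ1 x y) / (x ^ 2 + y ^ 2 - 2 * h) := by
  have hD := (sq_add_sq_sub_two_mul_pos hh x y).ne'
  have hnum : HasDerivAt (fun x' => 2 * (x' * ξ1 x' y + y * ξ2 x' y))
      (2 * (1 * ξ1 x y + x * pdx ξ1 x y + y * pdx ξ2 x y)) x :=
    (((hasDerivAt_id x).mul (hasDerivAt_pdx (hξ1 (x, y)))).add
      ((hasDerivAt_pdx (hξ2 (x, y))).const_mul y)).const_mul 2
  have hden : HasDerivAt (fun x' => x' ^ 2 + y ^ 2 - 2 * h) (2 * x ^ 1 * 1) x :=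
    (((hasDerivAt_id x).pow 2).add_const _).sub_const _
  rw [pdx, show (fun x' => pdy ξ2 x' y) = _ from funext (hK.pdy_snd · y),
    (hnum.fun_div hden hD).deriv, hK.pdx_fst, hK.pdx_snd hμ]
  field_simp
  ring

theorem fst_secondOrder (hK : KillingSystem μ h ξ1 ξ2) (hμ : μ ≠ 0) (hh : h < 0)
    (hξ1 : Differentiable ℝ (uncurry ξ1)) (hξ2 : ContDiff ℝ 2 (uncurry ξ2)) (x y : ℝ) :
    2 * μ * (x ^ 2 + y ^ 2 - 2 * h) * pdy (pdy ξ1) x y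
      - 4 * μ * y * pdy ξ1 x y + 4 * ξ1 x y = 0 := by
  have hD := (sq_add_sq_sub_two_mul_pos hh x y).ne'
  have hyy : pdy (pdy ξ1) x y = -(1 / μ) * pdy (pdx ξ2) x y := by
    rw [pdy, show (fun y' => pdy ξ1 x y') = _ from funext (hK.pdy_fst x ·),
      deriv_const_mul_field]
    rfl
  rw [hyy, pdy_pdx_eq_pdx_pdy hξ2, hK.pdx_pdy_snd hμ hh hξ1 (hξ2.differentiable two_ne_zero)]
  field_simp
  ring

end KillingSystem

/-- **Second-order equations satisfied by the components of a Killing field**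
of the metric `g = (2/(x²+y²−2h)²)·diag(1, 1/μ)` on `ℝ²`:
`2μ(x²+y²−2h)·∂ᵧᵧξ¹ − 4μy·∂ᵧξ¹ + 4ξ¹ = 0` and
`(2/μ)(x²+y²−2h)·∂ₓₓξ² − (4/μ)x·∂ₓξ² + 4ξ² = 0`. -/
theorem killing_field_second_order_equations
    (μ h : ℝ) (hμ : 1 < μ) (hh : h < 0)
    (ξ1 ξ2 : ℝ → ℝ → ℝ)
    (hξ1 : ContDiff ℝ 2 (fun p : ℝ × ℝ => ξ1 p.1 p.2))
    (hξ2 : ContDiff ℝ 2 (fun p : ℝ × ℝ => ξ2 p.1 p.2))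
    (hK : KillingSystem μ h ξ1 ξ2) :
    ∀ x y : ℝ,
      2 * μ * (x ^ 2 + y ^ 2 - 2 * h) * pdy (pdy ξ1) x y
        - 4 * μ * y * pdy ξ1 x y + 4 * ξ1 x y = 0 ∧
      (2 / μ) * (x ^ 2 + y ^ 2 - 2 * h) * pdx (pdx ξ2) x y
        - (4 / μ) * x * pdx ξ2 x y + 4 * ξ2 x y = 0 := by
  have hμ0 : μ ≠ 0 := (zero_lt_one.trans hμ).ne'
  intro x y
  refine ⟨hK.fst_secondOrder hμ0 hh (hξ1.differentiable two_ne_zero) hξ2 x y, ?_⟩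
  have hswap := (hK.swap hμ0).fst_secondOrder (inv_ne_zero hμ0) hh
    (hξ2.uncurry_swap.differentiable two_ne_zero) hξ1.uncurry_swap y x
  simp only [pdy_swap, Function.swap] at hswap
  linear_combination hswap
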